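/- arXiv:2509.22313 — 2 statements merged into one kernel-verified Lean document; each statement's English description precedes it below -/
import Mathlib

section
/- Let k be a field and let A be a finitely generated associative unital k-algebra with a finite generating set V = {x_1, ..., x_n}. Let S ⊆ A be a multiplicatively closed subset containing 1 whose elements pairwise commute with each other, and suppose that for every s ∈ S and every generator x_i ∈ V there exist s' ∈ S and a' ∈ A with s' x_i = a' s. Then S satisfies the left Ore condition in A, i.e. for every s ∈ S and every a ∈ A there exist s'' ∈ S and a'' ∈ A with s'' a = a'' s. -/
/-- Let `A` be a finitely generated algebra over a field `k` with finite generating set `V`.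
If `S ⊆ A` is multiplicatively closed, contains `1`, its elements pairwise commute, and the
left Ore condition holds for every `s ∈ S` against every generator `x ∈ V`, then `S`
satisfies the left Ore condition in `A`. -/
theorem ore_condition_from_generators
    (k : Type) [Field k] (A : Type) [Ring A] [Algebra k A]
    (V : Finset A) (hV : Algebra.adjoin k (V : Set A) = ⊤)
    (S : Set A) (hone : (1 : A) ∈ S)
    (hmul : ∀ s ∈ S, ∀ t ∈ S, s * t ∈ S)
    (hcomm : ∀ s ∈ S, ∀ t ∈ S, s * t = t * s)
    (hgen : ∀ s ∈ S, ∀ x ∈ V, ∃ s' ∈ S, ∃ a' : A, s' * x = a' * s) :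
    ∀ s ∈ S, ∀ a : A, ∃ s'' ∈ S, ∃ a'' : A, s'' * a = a'' * s := by
  have key : ∀ a : A, ∀ s ∈ S, ∃ s'' ∈ S, ∃ a'' : A, s'' * a = a'' * s := by
    intro a
    have ha : a ∈ Algebra.adjoin k (V : Set A) := by rw [hV]; trivial
    induction ha using Algebra.adjoin_induction with
    | mem x hx =>
      intro s hs
      obtain ⟨s', hs', a', h⟩ := hgen s hs x hx
      exact ⟨s', hs', a', h⟩
    | algebraMap r =>
      intro s hs
      exact ⟨s, hs, algebraMap k A r, by rw [Algebra.commutes]⟩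
    | add x y hx hy ihx ihy =>
      intro s hs
      obtain ⟨s1, hs1, a1, h1⟩ := ihx s hs
      obtain ⟨s2, hs2, a2, h2⟩ := ihy s hs
      refine ⟨s2 * s1, hmul _ hs2 _ hs1, s2 * a1 + s1 * a2, ?_⟩
      rw [mul_add, mul_assoc, h1, hcomm s2 hs2 s1 hs1, mul_assoc, h2,
        add_mul, mul_assoc, mul_assoc]
    | mul x y hx hy ihx ihy =>
      intro s hs
      obtain ⟨s2, hs2, a2, h2⟩ := ihy s hs
      obtain ⟨s1, hs1, a1, h1⟩ := ihx s2 hs2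
      refine ⟨s1, hs1, a1 * a2, ?_⟩
      calc s1 * (x * y) = (s1 * x) * y := by rw [mul_assoc]
        _ = a1 * (s2 * y) := by rw [h1, mul_assoc]
        _ = (a1 * a2) * s := by rw [h2, mul_assoc]
  intro s hs a
  exact key a s hs
end

section
/- The ordered monomials a_{22}^{n_1} a_{11}^{n_2} a_{12}^{n_3} a_{21}^{n_4}, as (n_1, n_2, n_3, n_4) ranges over ℕ^4, form a k-vector space basis of the reflection equation algebra O_q(Mat_2). -/
noncomputable section

open Matrix

/-- The ground field `k = ℂ(q^{1/2})`. -/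
abbrev K : Type := RatFunc ℂ

/-- `q^{1/2}`, the generating variable of `K = ℂ(q^{1/2})`. -/
def qh : K := RatFunc.X

/-- The quantum parameter `q = (q^{1/2})^2`. -/
def qq : K := qh ^ 2

/-- The reflection equation (RE) relations for a 2×2 matrix of elements,
with `A i j` playing the role of `a_{(i+1)(j+1)}`. -/
inductive ReRel {F : Type} [Ring F] [Algebra K F] (A : Matrix (Fin 2) (Fin 2) F) : F → F → Prop
  | r1 : ReRel A (A 0 1 * A 0 0 - A 0 0 * A 0 1) ((-((qq ^ 2)⁻¹ - 1)) • (A 0 1 * A 1 1))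
  | r2 : ReRel A (A 1 1 * A 0 0) (A 0 0 * A 1 1)
  | r3 : ReRel A (A 1 0 * A 0 0 - A 0 0 * A 1 0) (((qq ^ 2)⁻¹ - 1) • (A 1 1 * A 1 0))
  | r4 : ReRel A (A 1 1 * A 0 1) ((qq ^ 2) • (A 0 1 * A 1 1))
  | r5 : ReRel A (A 1 0 * A 0 1 - A 0 1 * A 1 0)
      ((-((qq ^ 2)⁻¹ - 1)) • (A 0 0 * A 1 1 - A 1 1 * A 1 1))
  | r6 : ReRel A (A 1 1 * A 1 0) (((qq ^ 2)⁻¹) • (A 1 0 * A 1 1))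

/-- Generators of the reflection equation algebra `O_q(Mat_2)`. -/
inductive MatGen : Type | g (i j : Fin 2)

abbrev FO := FreeAlgebra K MatGen

def OA : Matrix (Fin 2) (Fin 2) FO := fun i j => FreeAlgebra.ι K (MatGen.g i j)

/-- The reflection equation algebra `O_q(Mat_2)`. -/
abbrev OqM2 := RingQuot (ReRel OA)

/-- The generator `a_{(i+1)(j+1)}` of `O_q(Mat_2)`. -/
def oa (i j : Fin 2) : OqM2 := RingQuot.mkAlgHom K (ReRel OA) (OA i j)

/-- The quantum determinant `det_q = a₁₁a₂₂ - q² a₁₂a₂₁` of `O_q(Mat_2)`. -/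
def detq : OqM2 := oa 0 0 * oa 1 1 - (qq ^ 2) • (oa 0 1 * oa 1 0)

/-- The quantum trace `tr_q = a₁₁ + q⁻² a₂₂` of `O_q(Mat_2)`. -/
def trq : OqM2 := oa 0 0 + ((qq ^ 2)⁻¹) • oa 1 1

/-!
Spanning: the relations, read as rewriting rules towards the order `a₂₂ < a₁₁ < a₁₂ < a₂₁`
(`IsReMatrix`), show that the span of the ordered monomials is stable under left multiplication
by the generators; it contains `1`, so it is everything.

Independence: the same rules define four operators on the vector space `V` with basis `e n`,
`n ∈ ℕ⁴` (left multiplication by the generators, computed as if the ordered monomials were a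
basis). They satisfy the relations, so `V` is an `O_q(Mat_2)`-module in which the ordered monomial
with exponents `n` maps `e 0` to `e n`. The only relation that needs work is the one for
`a₂₁a₁₂`; it holds because `V` is free over the commuting operators `L22, L11`, and `L12`, `L21`
are semilinear for two mutually inverse twists of `K[L22, L11]`.
-/

theorem Submodule.mul_mem_of_mem_adjoin {R A : Type*} [CommSemiring R] [Semiring A] [Algebra R A]
    {S : Submodule R A} {s : Set A} (hs : ∀ a ∈ s, ∀ x ∈ S, a * x ∈ S) {a x : A}
    (ha : a ∈ Algebra.adjoin R s) (hx : x ∈ S) : a * x ∈ S := by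
  induction ha using Algebra.adjoin_induction generalizing x with
  | mem a ha => exact hs a ha x hx
  | algebraMap r => rw [← Algebra.smul_def]; exact S.smul_mem r hx
  | add a b _ _ ha hb => rw [add_mul]; exact S.add_mem (ha hx) (hb hx)
  | mul a b _ _ ha hb => rw [mul_assoc]; exact ha (hb hx)

theorem Submodule.mul_mem_span_range {R A ι : Type*} [CommSemiring R] [Semiring A] [Algebra R A]
    {v : ι → A} {a x : A} (h : ∀ i, a * v i ∈ span R (Set.range v))
    (hx : x ∈ span R (Set.range v)) : a * x ∈ span R (Set.range v) := by
  induction hx using Submodule.span_induction with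
  | mem x hx => obtain ⟨i, rfl⟩ := hx; exact h i
  | zero => simp
  | add x y _ _ hx hy => rw [mul_add]; exact add_mem hx hy
  | smul r x _ hx => rw [mul_smul_comm]; exact smul_mem _ r hx

theorem ReRel.map {F G : Type} [Ring F] [Algebra K F] [Ring G] [Algebra K G]
    {A : Matrix (Fin 2) (Fin 2) F} (f : F →ₐ[K] G) {x y : F} (h : ReRel A x y) :
    ReRel (A.map f) (f x) (f y) := by
  cases h <;> simp only [map_mul, map_sub, map_smul] <;> constructor

namespace OqM2

-- `RatFunc`'s instance `Algebra R K⟮X⟯` supplies non-canonical `ℕ`- and `ℤ`-algebra structures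
-- on `K`, which the `module` tactic rejects.
attribute [local instance] Semiring.toNatAlgebra Ring.toIntAlgebra

local notation "τ" => ((qq ^ 2)⁻¹ : K)

theorem qq_sq_ne_zero : (qq ^ 2 : K) ≠ 0 :=
  pow_ne_zero _ (pow_ne_zero _ RatFunc.X_ne_zero)

/-- The relations `ReRel`, solved for the products that are out of the PBW order
`a₂₂ < a₁₁ < a₁₂ < a₂₁`; here `τ = q⁻²`. -/
structure IsReMatrix {F : Type} [Ring F] [Algebra K F] (A : Matrix (Fin 2) (Fin 2) F) : Prop where
  a11_a22 : A 0 0 * A 1 1 = A 1 1 * A 0 0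
  a12_a22 : A 0 1 * A 1 1 = τ • (A 1 1 * A 0 1)
  a12_a11 : A 0 1 * A 0 0 = (A 0 0 + (τ - τ ^ 2) • A 1 1) * A 0 1
  a21_a22 : A 1 0 * A 1 1 = τ⁻¹ • (A 1 1 * A 1 0)
  a21_a11 : A 1 0 * A 0 0 = (A 0 0 + (τ - 1) • A 1 1) * A 1 0
  a21_a12 : A 1 0 * A 0 1 = A 0 1 * A 1 0 + (1 - τ) • (A 1 1 * A 0 0 - A 1 1 * A 1 1)

section

variable {F : Type} [Ring F] [Algebra K F] {A : Matrix (Fin 2) (Fin 2) F}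

theorem IsReMatrix.eq_of_reRel (h : IsReMatrix A) {x y : F} (hxy : ReRel A x y) : x = y := by
  cases hxy with
  | r1 => rw [h.a12_a11, h.a12_a22, add_mul, smul_mul_assoc]; module
  | r2 => exact h.a11_a22.symm
  | r3 => rw [h.a21_a11, add_mul, smul_mul_assoc]; module
  | r4 => rw [h.a12_a22, smul_smul, mul_inv_cancel₀ qq_sq_ne_zero, one_smul]
  | r5 => rw [h.a21_a12, h.a11_a22]; module
  | r6 => rw [h.a21_a22, smul_smul, mul_inv_cancel₀ (inv_ne_zero qq_sq_ne_zero), one_smul]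

theorem IsReMatrix.of_reRel (h : ∀ x y, ReRel A x y → x = y) : IsReMatrix A := by
  have hb : A 0 1 * A 1 1 = τ • (A 1 1 * A 0 1) := by
    rw [h _ _ .r4, smul_smul, inv_mul_cancel₀ qq_sq_ne_zero, one_smul]
  refine ⟨(h _ _ .r2).symm, hb, ?_, ?_, ?_, ?_⟩
  · rw [sub_eq_iff_eq_add'.1 (h _ _ .r1), hb, add_mul, smul_mul_assoc]; module
  · rw [h _ _ .r6, smul_smul, inv_mul_cancel₀ (inv_ne_zero qq_sq_ne_zero), one_smul]
  · rw [sub_eq_iff_eq_add'.1 (h _ _ .r3), add_mul, smul_mul_assoc]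
  · rw [sub_eq_iff_eq_add'.1 (h _ _ .r5), h _ _ .r2]; module

end

theorem isReMatrix_oa : IsReMatrix oa := .of_reRel fun x y h => by
  have hoa (i j : Fin 2) : RingQuot.mkAlgHom K (ReRel OA) (OA i j) = oa i j := rfl
  have hrel {x y : FO} (h : ReRel OA x y) := RingQuot.mkAlgHom_rel K h
  cases h <;>
  [simpa [hoa] using hrel .r1; simpa [hoa] using hrel .r2; simpa [hoa] using hrel .r3;
   simpa [hoa] using hrel .r4; simpa [hoa] using hrel .r5; simpa [hoa] using hrel .r6]

abbrev V : Type := (Fin 4 → ℕ) →₀ K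

/-- `e a b c d` stands for the ordered monomial `a₂₂^a a₁₁^b a₁₂^c a₂₁^d`; the operators `L11`,
`L12`, `L21`, `L22` below are left multiplication by the generators, computed with the rules of
`IsReMatrix` as if these monomials were a basis. -/
def e (a b c d : ℕ) : V := Finsupp.single ![a, b, c, d] 1

theorem single_eq_e (n : Fin 4 → ℕ) : Finsupp.single n 1 = e (n 0) (n 1) (n 2) (n 3) := by
  congr 1
  ext i
  fin_cases i <;> rfl

theorem V.hom_ext {M : Type} [AddCommMonoid M] [Module K M] {f g : V →ₗ[K] M}
    (h : ∀ a b c d, f (e a b c d) = g (e a b c d)) : f = g :=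
  Finsupp.basisSingleOne.ext fun n => by simpa [← single_eq_e] using h (n 0) (n 1) (n 2) (n 3)

def linearExtend (f : ℕ → ℕ → ℕ → ℕ → V) : Module.End K V :=
  Finsupp.linearCombination K fun n => f (n 0) (n 1) (n 2) (n 3)

@[simp]
theorem linearExtend_e (f : ℕ → ℕ → ℕ → ℕ → V) (a b c d : ℕ) :
    linearExtend f (e a b c d) = f a b c d := by
  simp [linearExtend, e]

def L22 : Module.End K V := linearExtend fun a b c d => e (a + 1) b c d

def L11 : Module.End K V := linearExtend fun a b c d => e a (b + 1) c d

@[simp] theorem L22_e (a b c d : ℕ) : L22 (e a b c d) = e (a + 1) b c d := linearExtend_e ..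

@[simp] theorem L11_e (a b c d : ℕ) : L11 (e a b c d) = e a (b + 1) c d := linearExtend_e ..

theorem commute_L22_L11 : Commute L22 L11 := by
  refine V.hom_ext fun a b c d => ?_
  simp

theorem L22_pow_e (k a b c d : ℕ) : (L22 ^ k) (e a b c d) = e (a + k) b c d := by
  induction k with
  | zero => rfl
  | succ k ih => rw [pow_succ', Module.End.mul_apply, ih, L22_e]; rfl

theorem L11_pow_e (k a b c d : ℕ) : (L11 ^ k) (e a b c d) = e a (b + k) c d := by
  induction k with
  | zero => rfl
  | succ k ih => rw [pow_succ', Module.End.mul_apply, ih, L11_e]; rfl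

theorem e_eq (a b c d : ℕ) : e a b c d = (L22 ^ a * L11 ^ b) (e 0 0 c d) := by
  simp [L11_pow_e, L22_pow_e]

theorem ext_of_commute {f g : Module.End K V} (hf22 : Commute f L22) (hf11 : Commute f L11)
    (hg22 : Commute g L22) (hg11 : Commute g L11) (h : ∀ c d, f (e 0 0 c d) = g (e 0 0 c d)) :
    f = g := by
  refine V.hom_ext fun a b c d => ?_
  have hM (φ : Module.End K V) (h22 : Commute φ L22) (h11 : Commute φ L11) (x : V) :
      φ ((L22 ^ a * L11 ^ b) x) = (L22 ^ a * L11 ^ b) (φ x) :=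
    LinearMap.congr_fun ((h22.pow_right a).mul_right (h11.pow_right b)).eq x
  rw [e_eq, hM f hf22 hf11, hM g hg22 hg11, h]

/-- The operator sending `e 0 0 c d` to `w c d` and semilinear for the twist `L22 ↦ s • L22`,
`L11 ↦ P` of `K[L22, L11]`. -/
def semilinearExtend (s : K) (P : Module.End K V) (w : ℕ → ℕ → V) : Module.End K V :=
  linearExtend fun a b c d => s ^ a • (L22 ^ a * P ^ b) (w c d)

section semilinearExtend

variable {s : K} {P : Module.End K V} {w : ℕ → ℕ → V}

@[simp]
theorem semilinearExtend_e00 (c d : ℕ) : semilinearExtend s P w (e 0 0 c d) = w c d := by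
  simp [semilinearExtend]

theorem semilinearExtend_mul_L22 :
    semilinearExtend s P w * L22 = s • (L22 * semilinearExtend s P w) := by
  refine V.hom_ext fun a b c d => ?_
  simp [semilinearExtend, pow_succ', smul_smul]

theorem semilinearExtend_mul_L11 (hP : Commute L22 P) :
    semilinearExtend s P w * L11 = P * semilinearExtend s P w := by
  refine V.hom_ext fun a b c d => ?_
  simp only [semilinearExtend, linearExtend_e, L11_e, Module.End.mul_apply, map_smul, pow_succ']
  rw [← Module.End.mul_apply (L22 ^ a) P, (hP.pow_left a).eq, Module.End.mul_apply]

end semilinearExtend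

theorem commute_L22_L11_add_smul_L22 (x : K) : Commute L22 (L11 + x • L22) :=
  commute_L22_L11.add_right ((Commute.refl L22).smul_right x)

def L12 : Module.End K V :=
  semilinearExtend τ (L11 + (τ - τ ^ 2) • L22) fun c d => e 0 0 (c + 1) d

/-- `a₂₁ a₁₂^c a₂₁^d`, computed with the rule `a21_a12`. -/
def a21Mul : ℕ → ℕ → V
  | 0, d => e 0 0 0 (d + 1)
  | c + 1, d => L12 (a21Mul c d) + (1 - τ) • (L22 * L11 - L22 * L22) (e 0 0 c d)

def L21 : Module.End K V :=
  semilinearExtend τ⁻¹ (L11 + (τ - 1) • L22) a21Mul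

theorem L12_mul_L22 : L12 * L22 = τ • (L22 * L12) := semilinearExtend_mul_L22

theorem L12_mul_L11 : L12 * L11 = (L11 + (τ - τ ^ 2) • L22) * L12 :=
  semilinearExtend_mul_L11 (commute_L22_L11_add_smul_L22 _)

theorem L21_mul_L22 : L21 * L22 = τ⁻¹ • (L22 * L21) := semilinearExtend_mul_L22

theorem L21_mul_L11 : L21 * L11 = (L11 + (τ - 1) • L22) * L21 :=
  semilinearExtend_mul_L11 (commute_L22_L11_add_smul_L22 _)

theorem L12_mul_L11_add_smul_L22 : L12 * (L11 + (τ - 1) • L22) = L11 * L12 := by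
  rw [mul_add, mul_smul_comm, L12_mul_L11, L12_mul_L22, add_mul, smul_mul_assoc]
  module

theorem L21_mul_L11_add_smul_L22 : L21 * (L11 + (τ - τ ^ 2) • L22) = L11 * L21 := by
  have hτ : (τ - τ ^ 2) * τ⁻¹ = 1 - τ := by
    have hτ0 : τ ≠ 0 := inv_ne_zero qq_sq_ne_zero
    generalize τ = t at hτ0 ⊢
    field_simp
  rw [mul_add, mul_smul_comm, L21_mul_L11, L21_mul_L22, add_mul, smul_mul_assoc, smul_smul, hτ]
  module

theorem commute_L21_mul_L12_L22 : Commute (L21 * L12) L22 := by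
  refine SemiconjBy.mul_left (y := τ • L22) ?_ (by rw [SemiconjBy, L12_mul_L22, smul_mul_assoc])
  rw [SemiconjBy, mul_smul_comm, L21_mul_L22, smul_smul,
    mul_inv_cancel₀ (inv_ne_zero qq_sq_ne_zero), one_smul]

theorem commute_L12_mul_L21_L22 : Commute (L12 * L21) L22 := by
  refine SemiconjBy.mul_left (y := τ⁻¹ • L22) ?_ (by rw [SemiconjBy, L21_mul_L22, smul_mul_assoc])
  rw [SemiconjBy, mul_smul_comm, L12_mul_L22, smul_smul,
    inv_mul_cancel₀ (inv_ne_zero qq_sq_ne_zero), one_smul]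

theorem commute_L21_mul_L12_L11 : Commute (L21 * L12) L11 :=
  SemiconjBy.mul_left L21_mul_L11_add_smul_L22 L12_mul_L11

theorem commute_L12_mul_L21_L11 : Commute (L12 * L21) L11 :=
  SemiconjBy.mul_left L12_mul_L11_add_smul_L22 L21_mul_L11

/-- Both sides commute with `L22` and `L11` (the twists of `L12` and `L21` are mutually inverse), so
they need only agree on the `e 0 0 c d`, where this is the definition of `a21Mul`. -/
theorem L21_mul_L12 : L21 * L12 = L12 * L21 + (1 - τ) • (L22 * L11 - L22 * L22) := by
  have h22 : Commute (L22 * L11 - L22 * L22) L22 :=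
    Commute.sub_left (R := Module.End K V) ((Commute.refl L22).mul_left commute_L22_L11.symm)
      ((Commute.refl L22).mul_left (.refl L22))
  have h11 : Commute (L22 * L11 - L22 * L22) L11 :=
    Commute.sub_left (R := Module.End K V) (commute_L22_L11.mul_left (.refl L11))
      (commute_L22_L11.mul_left commute_L22_L11)
  refine ext_of_commute commute_L21_mul_L12_L22 commute_L21_mul_L12_L11
    (commute_L12_mul_L21_L22.add_left (h22.smul_left _))
    (commute_L12_mul_L21_L11.add_left (h11.smul_left _)) fun c d => ?_
  simp [L12, L21, a21Mul]

def L : Matrix (Fin 2) (Fin 2) (Module.End K V) := !![L11, L12; L21, L22]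

theorem isReMatrix_L : IsReMatrix L where
  a11_a22 := commute_L22_L11.eq.symm
  a12_a22 := L12_mul_L22
  a12_a11 := L12_mul_L11
  a21_a22 := L21_mul_L22
  a21_a11 := L21_mul_L11
  a21_a12 := L21_mul_L12

def rep : OqM2 →ₐ[K] Module.End K V :=
  RingQuot.liftAlgHom K ⟨FreeAlgebra.lift K fun ⟨i, j⟩ => L i j, fun _ _ h => by
    have hL : OA.map (FreeAlgebra.lift K fun ⟨i, j⟩ => L i j) = L := by
      ext i j; simp [OA]
    have h' := h.map (FreeAlgebra.lift K fun ⟨i, j⟩ => L i j)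
    rw [hL] at h'
    exact isReMatrix_L.eq_of_reRel h'⟩

@[simp]
theorem rep_oa (i j : Fin 2) : rep (oa i j) = L i j := by
  simp [rep, oa, OA]

theorem L12_pow_e (k c d : ℕ) : (L12 ^ k) (e 0 0 c d) = e 0 0 (c + k) d := by
  induction k with
  | zero => rfl
  | succ k ih => rw [pow_succ', Module.End.mul_apply, ih, L12, semilinearExtend_e00]; rfl

theorem L21_pow_e (k d : ℕ) : (L21 ^ k) (e 0 0 0 d) = e 0 0 0 (d + k) := by
  induction k with
  | zero => rfl
  | succ k ih => rw [pow_succ', Module.End.mul_apply, ih, L21, semilinearExtend_e00]; rfl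

def orderedMonomial (a b c d : ℕ) : OqM2 := oa 1 1 ^ a * oa 0 0 ^ b * oa 0 1 ^ c * oa 1 0 ^ d

theorem rep_orderedMonomial (a b c d : ℕ) :
    rep (orderedMonomial a b c d) (e 0 0 0 0) = e a b c d := by
  simp [orderedMonomial, L, L21_pow_e, L12_pow_e, L11_pow_e, L22_pow_e]

theorem linearIndependent_orderedMonomial :
    LinearIndependent K fun n : Fin 4 → ℕ => orderedMonomial (n 0) (n 1) (n 2) (n 3) := by
  refine .of_comp ((LinearMap.applyₗ (e 0 0 0 0)).comp rep.toLinearMap) ?_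
  convert Finsupp.linearIndependent_single_one K (Fin 4 → ℕ) with n
  simp [rep_orderedMonomial, single_eq_e]

theorem adjoin_oa_eq_top :
    Algebra.adjoin K (Set.range fun p : Fin 2 × Fin 2 => oa p.1 p.2) = ⊤ := by
  have hsurj : Function.Surjective fun p : Fin 2 × Fin 2 => MatGen.g p.1 p.2 :=
    fun ⟨i, j⟩ => ⟨(i, j), rfl⟩
  have hrange : Set.range (fun p : Fin 2 × Fin 2 => oa p.1 p.2) =
      RingQuot.mkAlgHom K (ReRel OA) '' Set.range (FreeAlgebra.ι K) := by
    rw [← Set.range_comp, ← hsurj.range_comp]; rfl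
  rw [hrange, Algebra.adjoin_image, FreeAlgebra.adjoin_range_ι, Algebra.map_top,
    AlgHom.range_eq_top]
  exact RingQuot.mkAlgHom_surjective K _

theorem mul_orderedMonomial_of_semiconjBy {g D A : OqM2} (hD : SemiconjBy g (oa 1 1) D)
    (hA : SemiconjBy g (oa 0 0) A) (a b c d : ℕ) :
    g * orderedMonomial a b c d = D ^ a * A ^ b * (g * (oa 0 1 ^ c * oa 1 0 ^ d)) := by
  rw [orderedMonomial, mul_assoc _ (oa 0 1 ^ c), ← mul_assoc,
    ((hD.pow_right a).mul_right (hA.pow_right b)).eq, mul_assoc]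

def pbwSpan : Submodule K OqM2 :=
  Submodule.span K (Set.range fun n : Fin 4 → ℕ => orderedMonomial (n 0) (n 1) (n 2) (n 3))

theorem orderedMonomial_mem_pbwSpan (a b c d : ℕ) : orderedMonomial a b c d ∈ pbwSpan :=
  Submodule.subset_span ⟨![a, b, c, d], rfl⟩

theorem mul_mem_pbwSpan {g x : OqM2} (h : ∀ a b c d, g * orderedMonomial a b c d ∈ pbwSpan)
    (hx : x ∈ pbwSpan) : g * x ∈ pbwSpan :=
  Submodule.mul_mem_span_range (fun n => h (n 0) (n 1) (n 2) (n 3)) hx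

theorem a22_mul_mem_pbwSpan {x : OqM2} (hx : x ∈ pbwSpan) : oa 1 1 * x ∈ pbwSpan := by
  refine mul_mem_pbwSpan (fun a b c d => ?_) hx
  rw [orderedMonomial, mul_assoc, mul_assoc, ← mul_assoc _ (oa 1 1 ^ a), ← pow_succ',
    ← mul_assoc, ← mul_assoc]
  exact orderedMonomial_mem_pbwSpan (a + 1) b c d

theorem a11_mul_mem_pbwSpan {x : OqM2} (hx : x ∈ pbwSpan) : oa 0 0 * x ∈ pbwSpan := by
  refine mul_mem_pbwSpan (fun a b c d => ?_) hx
  rw [mul_orderedMonomial_of_semiconjBy isReMatrix_oa.a11_a22 (Commute.refl _), ← mul_assoc,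
    mul_assoc (oa 1 1 ^ a), ← pow_succ]
  simpa [orderedMonomial, mul_assoc] using orderedMonomial_mem_pbwSpan a (b + 1) c d

theorem a11_mem_adjoin : oa 0 0 ∈ Algebra.adjoin K {oa 0 0, oa 1 1} :=
  Algebra.subset_adjoin (by simp)

theorem a22_mem_adjoin : oa 1 1 ∈ Algebra.adjoin K {oa 0 0, oa 1 1} :=
  Algebra.subset_adjoin (by simp)

theorem mul_mem_pbwSpan_of_mem_adjoin {y x : OqM2} (hy : y ∈ Algebra.adjoin K {oa 0 0, oa 1 1})
    (hx : x ∈ pbwSpan) : y * x ∈ pbwSpan := by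
  refine Submodule.mul_mem_of_mem_adjoin ?_ hy hx
  rintro g (rfl | rfl) x hx
  exacts [a11_mul_mem_pbwSpan hx, a22_mul_mem_pbwSpan hx]

theorem pow_mul_pow_mem_adjoin (x y : K) (a b : ℕ) :
    (x • oa 1 1) ^ a * (oa 0 0 + y • oa 1 1) ^ b ∈ Algebra.adjoin K {oa 0 0, oa 1 1} :=
  mul_mem (pow_mem (Subalgebra.smul_mem _ a22_mem_adjoin x) a)
    (pow_mem (add_mem a11_mem_adjoin (Subalgebra.smul_mem _ a22_mem_adjoin y)) b)

theorem a12_mul_mem_pbwSpan {x : OqM2} (hx : x ∈ pbwSpan) : oa 0 1 * x ∈ pbwSpan := by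
  refine mul_mem_pbwSpan (fun a b c d => ?_) hx
  rw [mul_orderedMonomial_of_semiconjBy (D := τ • oa 1 1)
    (by rw [SemiconjBy, isReMatrix_oa.a12_a22, smul_mul_assoc]) isReMatrix_oa.a12_a11]
  refine mul_mem_pbwSpan_of_mem_adjoin (pow_mul_pow_mem_adjoin _ _ a b) ?_
  simpa [orderedMonomial, ← mul_assoc, ← pow_succ'] using
    orderedMonomial_mem_pbwSpan 0 0 (c + 1) d

theorem a21_mul_mem_pbwSpan {x : OqM2} (hx : x ∈ pbwSpan) : oa 1 0 * x ∈ pbwSpan := by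
  have hmem (c d : ℕ) : oa 1 0 * (oa 0 1 ^ c * oa 1 0 ^ d) ∈ pbwSpan := by
    induction c with
    | zero =>
      simpa [orderedMonomial, ← pow_succ'] using orderedMonomial_mem_pbwSpan 0 0 0 (d + 1)
    | succ c ih =>
      rw [pow_succ', mul_assoc, ← mul_assoc, isReMatrix_oa.a21_a12, add_mul, mul_assoc,
        smul_mul_assoc]
      refine add_mem (a12_mul_mem_pbwSpan ih) (Submodule.smul_mem _ _
        (mul_mem_pbwSpan_of_mem_adjoin ?_ ?_))
      · exact sub_mem (mul_mem a22_mem_adjoin a11_mem_adjoin)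
          (mul_mem a22_mem_adjoin a22_mem_adjoin)
      · simpa [orderedMonomial] using orderedMonomial_mem_pbwSpan 0 0 c d
  refine mul_mem_pbwSpan (fun a b c d => ?_) hx
  rw [mul_orderedMonomial_of_semiconjBy (D := τ⁻¹ • oa 1 1)
    (by rw [SemiconjBy, isReMatrix_oa.a21_a22, smul_mul_assoc]) isReMatrix_oa.a21_a11]
  exact mul_mem_pbwSpan_of_mem_adjoin (pow_mul_pow_mem_adjoin _ _ a b) (hmem c d)

theorem pbwSpan_eq_top : pbwSpan = ⊤ := by
  have hgen : ∀ g ∈ Set.range (fun p : Fin 2 × Fin 2 => oa p.1 p.2), ∀ y ∈ pbwSpan,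
      g * y ∈ pbwSpan := by
    rintro _ ⟨⟨i, j⟩, rfl⟩ y hy
    fin_cases i <;> fin_cases j
    exacts [a11_mul_mem_pbwSpan hy, a12_mul_mem_pbwSpan hy, a21_mul_mem_pbwSpan hy,
      a22_mul_mem_pbwSpan hy]
  refine eq_top_iff.2 fun x _ => ?_
  simpa [orderedMonomial] using Submodule.mul_mem_of_mem_adjoin hgen
    (adjoin_oa_eq_top ▸ Algebra.mem_top) (orderedMonomial_mem_pbwSpan 0 0 0 0)

end OqM2

/-- The ordered monomials `a₂₂^{n₁} a₁₁^{n₂} a₁₂^{n₃} a₂₁^{n₄}`, for `(n₁,n₂,n₃,n₄) ∈ ℕ⁴`,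
form a `K`-vector space basis of `O_q(Mat_2)`. -/
theorem pbw_basis_OqM2 :
    ∃ B : Module.Basis (Fin 4 → ℕ) K OqM2,
      ∀ n : Fin 4 → ℕ,
        B n = oa 1 1 ^ n 0 * oa 0 0 ^ n 1 * oa 0 1 ^ n 2 * oa 1 0 ^ n 3 :=
  ⟨.mk OqM2.linearIndependent_orderedMonomial OqM2.pbwSpan_eq_top.ge,
    fun _ => Module.Basis.mk_apply ..⟩
end
end
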